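/- Let D be a noncommutative division ring and A an abelian maximal subgroup of the multiplicative group D^*. Then A is self-normalizing: the normalizer of A in D^* equals A. -/

import Mathlib

/-!
If the normalizer of `A` were larger than `A`, maximality would make `A` normal. The centralizer
of `A` in `D` is then a division subring stable under all inner automorphisms, so by
Cartan–Brauer–Hua it is either `D` or central; either way `A` is central. A central maximal
subgroup forces the whole group to be abelian: the centralizer of any `g ∉ A` strictly contains
`A`, so `g` is central too. Hence `Dˣ`, and with it `D`, would be commutative.
-/

namespace Subfield

variable {D : Type*} [DivisionRing D]

def centralizer (s : Set D) : Subfield D where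
  __ := Subring.centralizer s
  inv_mem' _ := Set.inv_mem_centralizer₀

theorem conj_mem_centralizer {s : Set D} {x k : D} (hx : x ≠ 0)
    (hs : ∀ u ∈ s, x⁻¹ * u * x ∈ s) (hk : k ∈ centralizer s) :
    x * k * x⁻¹ ∈ centralizer s := by
  intro u hu
  have h := congrArg (x * · * x⁻¹) (hk _ (hs u hu))
  simp only [mul_assoc, mul_inv_cancel_left₀ hx, mul_inv_cancel₀ hx, mul_one] at h
  simpa only [mul_assoc] using h

/-- If `x ∉ K`, then `x` and `1 + x` conjugate `a` into `K`, and comparing the two relations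
`x * a = k * x`, `(1 + x) * a = k' * (1 + x)` gives `a - k' = (k' - k) * x`; as `x ∉ K` this
forces `k = k' = a`. -/
theorem commute_of_notMem_of_conj_mem {K : Subfield D}
    (hK : ∀ x : D, x ≠ 0 → ∀ k ∈ K, x * k * x⁻¹ ∈ K) {a x : D} (ha : a ∈ K) (hx : x ∉ K) :
    Commute x a := by
  have hx1 : 1 + x ∉ K := fun h => hx (by simpa using K.sub_mem h K.one_mem)
  have hx0 : x ≠ 0 := fun h => hx (h ▸ K.zero_mem)
  have hx10 : 1 + x ≠ 0 := fun h => hx1 (h ▸ K.zero_mem)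
  set k := x * a * x⁻¹ with hk
  set k' := (1 + x) * a * (1 + x)⁻¹ with hk'
  have e : x * a = k * x := by rw [hk, inv_mul_cancel_right₀ hx0]
  have e' : (1 + x) * a = k' * (1 + x) := by rw [hk', inv_mul_cancel_right₀ hx10]
  have key : a - k' = (k' - k) * x := by
    rw [add_mul, one_mul, e, mul_add, mul_one] at e'
    rw [sub_mul, sub_eq_sub_iff_add_eq_add, e', add_comm]
  obtain hkk | hkk := eq_or_ne k' k
  · rw [hkk, sub_self, zero_mul, sub_eq_zero] at key
    rw [Commute, SemiconjBy, e, key]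
  · refine absurd ?_ hx
    have hkK : k ∈ K := hK x hx0 a ha
    have hk'K : k' ∈ K := hK _ hx10 a ha
    rw [show x = (k' - k)⁻¹ * (a - k') by rw [key, inv_mul_cancel_left₀ (sub_ne_zero.2 hkk)]]
    exact K.mul_mem (K.inv_mem (K.sub_mem hk'K hkK)) (K.sub_mem ha hk'K)

/-- The Cartan–Brauer–Hua theorem. -/
theorem coe_subset_center_of_conj_mem {K : Subfield D}
    (hK : ∀ x : D, x ≠ 0 → ∀ k ∈ K, x * k * x⁻¹ ∈ K) (hne : K ≠ ⊤) :
    (K : Set D) ⊆ Set.center D := by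
  intro a ha
  rw [Semigroup.mem_center_iff]
  intro y
  obtain ⟨x, hx⟩ : ∃ x, x ∉ K := by
    by_contra! h
    exact hne (eq_top_iff.2 fun x _ => h x)
  by_cases hy : y ∈ K
  · have hxy : x + y ∉ K := fun h => hx (by simpa using K.sub_mem h hy)
    simpa using ((commute_of_notMem_of_conj_mem hK ha hxy).sub_left
      (commute_of_notMem_of_conj_mem hK ha hx)).eq
  · exact (commute_of_notMem_of_conj_mem hK ha hy).eq

end Subfield

theorem Units.le_center_of_normal {D : Type*} [DivisionRing D] {A : Subgroup Dˣ} [A.Normal]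
    (hcomm : ∀ a ∈ A, ∀ b ∈ A, a * b = b * a) : A ≤ Subgroup.center Dˣ := by
  set K := Subfield.centralizer ((↑) '' (A : Set Dˣ) : Set D)
  have hAK : ∀ a ∈ A, (a : D) ∈ K := by
    rintro a ha _ ⟨b, hb, rfl⟩
    exact congrArg Units.val (hcomm b hb a ha)
  have hcenter : ∀ a ∈ A, (a : D) ∈ Set.center D := by
    intro a ha
    by_cases hK : K = ⊤
    · rw [Semigroup.mem_center_iff]
      intro y
      exact ((hK ▸ Subfield.mem_top y : y ∈ K) a ⟨a, ha, rfl⟩).symm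
    · refine Subfield.coe_subset_center_of_conj_mem (fun x hx k hk => ?_) hK (hAK a ha)
      refine Subfield.conj_mem_centralizer hx ?_ hk
      rintro _ ⟨u, hu, rfl⟩
      refine ⟨(Units.mk0 x hx)⁻¹ * u * Units.mk0 x hx, ?_, by simp⟩
      simpa using ‹A.Normal›.conj_mem u hu (Units.mk0 x hx)⁻¹
  intro a ha
  rw [← SetLike.mem_coe, Subgroup.coe_center, Set.center_units_eq]
  exact hcenter a ha

theorem Subgroup.center_eq_top_of_isCoatom_le_center {G : Type*} [Group G] {A : Subgroup G}
    (hA : IsCoatom A) (hAZ : A ≤ center G) : center G = ⊤ := by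
  obtain ⟨g, -, hg⟩ := SetLike.exists_of_lt hA.lt_top
  have hgZ : g ∈ center G := by
    have : centralizer {g} = ⊤ := hA.2 _ <| SetLike.lt_iff_le_and_exists.2
      ⟨fun a ha => mem_centralizer_singleton_iff.2 (mem_center_iff.1 (hAZ ha) g).symm,
        g, mem_centralizer_singleton_iff.2 rfl, hg⟩
    exact centralizer_eq_top_iff_subset.1 this rfl
  exact hA.2 _ (SetLike.lt_iff_le_and_exists.2 ⟨hAZ, g, hgZ, hg⟩)

theorem Set.center_eq_univ_of_center_units_eq_top {G₀ : Type*} [GroupWithZero G₀]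
    (h : Subgroup.center G₀ˣ = ⊤) : Set.center G₀ = Set.univ := by
  refine Set.eq_univ_of_forall fun b => ?_
  obtain rfl | hb := eq_or_ne b 0
  · exact Set.zero_mem_center
  · have hu : Units.mk0 b hb ∈ (Subgroup.center G₀ˣ : Set G₀ˣ) := h ▸ Subgroup.mem_top _
    rw [Subgroup.coe_center, Set.center_units_eq] at hu
    exact hu

/-- An abelian maximal subgroup `A` of `Dˣ` (`D` a noncommutative division
ring) is self-normalizing. -/
theorem stmt_2 {D : Type*} [DivisionRing D]
    (hD : ∃ a b : D, a * b ≠ b * a)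
    (A : Subgroup Dˣ) (hmax : IsCoatom A)
    (habel : ∀ a ∈ A, ∀ b ∈ A, a * b = b * a) :
    Subgroup.normalizer (A : Set Dˣ) = A := by
  refine A.le_normalizer.lt_or_eq.elim (fun hlt => ?_) Eq.symm
  have : A.Normal := Subgroup.normalizer_eq_top_iff.1 (hmax.2 _ hlt)
  have hZ := Subgroup.center_eq_top_of_isCoatom_le_center hmax (Units.le_center_of_normal habel)
  obtain ⟨a, b, hab⟩ := hD
  have hb : b ∈ Set.center D := Set.center_eq_univ_of_center_units_eq_top hZ ▸ Set.mem_univ b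
  exact absurd (Semigroup.mem_center_iff.1 hb a) hab
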